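/- Let the sawtooth epigraph relaxation Q^L be the set of (x, z) ∈ [0,1] × ℝ such that z ≥ F^j(x) − 2^{−2j−2} for all j = 0,…,L, z ≥ 0, and z ≥ 2x − 1. Then the maximum underestimation error sup over (x,z) ∈ Q^L with z ≤ x² of (x² − z) equals 2^{−2L−4}. -/

import Mathlib

/-- The tooth function `G(x) = min (2x) (2(1-x))`. -/
noncomputable def sawG (x : ℝ) : ℝ := min (2 * x) (2 * (1 - x))

/-- The sawtooth approximation `F^j(x) = x - ∑_{i=1}^j 2^{-2i} G^i(x)`. -/
noncomputable def sawF (L : ℕ) (x : ℝ) : ℝ :=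
  x - ∑ j ∈ Finset.Icc 1 L, (2 : ℝ) ^ (-(2 * (j : ℤ))) * sawG^[j] x

/-!
Since `G(x) = 1 - |2x - 1|`, the recursion `F^{j+1} = F^j - 4^{-j-1} G^{j+1}` gives
`F^j(x) = x² + G^j(x)(1 - G^j(x))/4^j` for every real `x`: the chord of `x²` over the dyadic cell
of width `2^{-j}` containing `x`. Hence `F^j(x) - 2^{-2j-2} = x² - ((1 - 2G^j(x))/2^{j+1})²` is the
tangent to `x²` at the midpoint of that cell. With the tangents `0` and `2x - 1` at `0` and `1`
these are the tangents at all grid points `k/2^{L+1}`, so `x² - z` is at most the squared distance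
from `x` to the grid, which is at most `2^{-2L-4}`; through `G^{j+1}(x) = G^j(G(x))` that distance
bound becomes an induction on `L`. Equality holds at `x = 2^{-L-2}`, `z = 0`.
-/

open Function

lemma two_zpow_neg_two_mul (n : ℕ) : (2 : ℝ) ^ (-(2 * (n : ℤ))) = ((2 ^ n) ^ 2)⁻¹ := by
  rw [zpow_neg, mul_comm, zpow_mul, zpow_natCast, zpow_ofNat]

lemma sawG_eq_one_sub_abs (x : ℝ) : sawG x = 1 - |2 * x - 1| := by
  rcases le_total x (1 / 2) with h | h
  · rw [sawG, min_eq_left (by linarith), abs_of_nonpos (by linarith)]; ring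
  · rw [sawG, min_eq_right (by linarith), abs_of_nonneg (by linarith)]; ring

lemma sawG_of_le_half {x : ℝ} (h : x ≤ 1 / 2) : sawG x = 2 * x :=
  min_eq_left (by linarith)

lemma sawG_mul_one_sub_sawG (x : ℝ) :
    sawG x * (1 - sawG x) = 4 * (x * (1 - x)) - sawG x := by
  rw [sawG_eq_one_sub_abs]
  linear_combination -(sq_abs (2 * x - 1))

lemma sawG_iterate_eq_two_pow_mul {j : ℕ} {x : ℝ} (h : 2 ^ j * x ≤ 1) :
    sawG^[j] x = 2 ^ j * x := by
  induction j with
  | zero => simp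
  | succ j ih =>
    have h' : 2 ^ j * x ≤ 1 / 2 := by rw [pow_succ] at h; linarith
    rw [iterate_succ_apply', ih (h'.trans (by norm_num)), sawG_of_le_half h', pow_succ]
    ring

lemma sawF_succ (j : ℕ) (x : ℝ) :
    sawF (j + 1) x = sawF j x - sawG^[j + 1] x / (2 ^ (j + 1)) ^ 2 := by
  rw [sawF, sawF, Finset.sum_Icc_succ_top (by omega), two_zpow_neg_two_mul]
  ring

lemma sawF_eq_sq_add (j : ℕ) (x : ℝ) :
    sawF j x = x ^ 2 + sawG^[j] x * (1 - sawG^[j] x) / (2 ^ j) ^ 2 := by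
  induction j with
  | zero =>
    rw [sawF, Finset.Icc_eq_empty_of_lt zero_lt_one, Finset.sum_empty, iterate_zero_apply]
    ring
  | succ j ih =>
    rw [sawF_succ, ih, iterate_succ_apply' _ j, sawG_mul_one_sub_sawG, pow_succ]
    field_simp
    ring

lemma sawF_sub_eq_sq_sub_sq (j : ℕ) (x : ℝ) :
    sawF j x - (2 : ℝ) ^ (-(2 * (j : ℤ)) - 2) =
      x ^ 2 - ((1 - 2 * sawG^[j] x) / 2 ^ (j + 1)) ^ 2 := by
  rw [show -(2 * (j : ℤ)) - 2 = -(2 * ((j + 1 : ℕ) : ℤ)) by push_cast; ring,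
    two_zpow_neg_two_mul, sawF_eq_sq_add, pow_succ]
  field_simp
  ring

lemma sawF_sub_nonpos {j : ℕ} {x : ℝ} (hx : 0 ≤ x) (h : 2 ^ (j + 2) * x ≤ 1) :
    sawF j x - (2 : ℝ) ^ (-(2 * (j : ℤ)) - 2) ≤ 0 := by
  have hpow : (0 : ℝ) < 2 ^ j := by positivity
  rw [pow_add] at h
  rw [sawF_sub_eq_sq_sub_sq, sub_nonpos, sawG_iterate_eq_two_pow_mul (by nlinarith)]
  refine pow_le_pow_left₀ hx ?_ 2
  rw [le_div_iff₀ (by positivity), pow_succ]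
  linarith

lemma le_or_one_sub_le_or_exists_abs_le (L : ℕ) (y : ℝ) :
    y ≤ (2 ^ (L + 2))⁻¹ ∨ 1 - y ≤ (2 ^ (L + 2))⁻¹ ∨
      ∃ j ≤ L, |(1 - 2 * sawG^[j] y) / 2 ^ (j + 1)| ≤ (2 ^ (L + 2))⁻¹ := by
  induction L generalizing y with
  | zero =>
    by_contra! h
    obtain ⟨h₀, h₁, h₂⟩ := h
    have h₃ := h₂ 0 le_rfl
    norm_num [abs_div] at h₀ h₁ h₃
    rcases lt_abs.mp (by linarith : 1 / 2 < |1 - 2 * y|) with h₄ | h₄ <;> linarith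
  | succ L ih =>
    have hε : ((2 : ℝ) ^ (L + 1 + 2))⁻¹ = (2 ^ (L + 2))⁻¹ / 2 := by
      rw [show L + 1 + 2 = L + 2 + 1 by ring, pow_succ, mul_inv, div_eq_mul_inv]
    rw [hε]
    rcases ih (sawG y) with h | h | ⟨j, hj, h⟩
    · rw [sawG_eq_one_sub_abs] at h
      rcases abs_cases (2 * y - 1) with ⟨ha, -⟩ | ⟨ha, -⟩ <;> rw [ha] at h
      · right; left; linarith
      · left; linarith
    · refine Or.inr (Or.inr ⟨0, by omega, ?_⟩)
      rw [sawG_eq_one_sub_abs] at h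
      rw [iterate_zero_apply, abs_div, abs_sub_comm, zero_add, pow_one, abs_two]
      linarith
    · refine Or.inr (Or.inr ⟨j + 1, by omega, ?_⟩)
      rw [iterate_succ_apply, pow_succ, ← div_div, abs_div, abs_two]
      linarith

/-- The maximum underestimation error of the depth-`L` sawtooth epigraph
relaxation `Q^L` for `z ≥ x²` on `[0, 1]` equals `2^{-2L-4}`: the supremum of
`x² - z` over all `(x, z)` with `x ∈ [0,1]`, `z ≥ F^j(x) - 2^{-2j-2}` for
`j = 0, …, L`, `z ≥ 0`, `z ≥ 2x - 1` and `z ≤ x²` is attained and equals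
`2^{-2L-4}`. -/
theorem sawtooth_epigraph_max_error (L : ℕ) :
    IsGreatest {e : ℝ | ∃ x z : ℝ, x ∈ Set.Icc (0 : ℝ) 1 ∧
        (∀ j : ℕ, j ≤ L → sawF j x - (2 : ℝ) ^ (-(2 * (j : ℤ)) - 2) ≤ z) ∧
        0 ≤ z ∧ 2 * x - 1 ≤ z ∧ z ≤ x ^ 2 ∧ e = x ^ 2 - z}
      ((2 : ℝ) ^ (-(2 * (L : ℤ)) - 4)) := by
  rw [show -(2 * (L : ℤ)) - 4 = -(2 * ((L + 2 : ℕ) : ℤ)) by push_cast; ring,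
    two_zpow_neg_two_mul, ← inv_pow]
  set ε : ℝ := (2 ^ (L + 2))⁻¹
  have hε : ε ≤ 1 / 2 ^ 2 := by
    rw [one_div]; exact inv_anti₀ (by positivity) (pow_le_pow_right₀ one_le_two (by omega))
  refine ⟨⟨ε, 0, ⟨by positivity, by linarith⟩, fun j hj => sawF_sub_nonpos (by positivity) ?_,
    le_rfl, by linarith, by positivity, by ring⟩, ?_⟩
  · rw [← div_eq_mul_inv, div_le_one (by positivity)]
    exact pow_le_pow_right₀ one_le_two (by omega)
  · rintro _ ⟨x, z, ⟨hx₀, hx₁⟩, hF, hz₀, hz₁, -, rfl⟩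
    rcases le_or_one_sub_le_or_exists_abs_le L x with h | h | ⟨j, hj, h⟩
    · nlinarith
    · nlinarith
    · have htangent := sawF_sub_eq_sq_sub_sq j x ▸ hF j hj
      nlinarith [sq_le_sq.mpr (h.trans (le_abs_self ε))]
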